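/- Let d ≥ 1, N ∈ ℕ, ρ ∈ ℝ^d with 0 < ρ_i < 1 and ρ_1+⋯+ρ_d < 1. Then for every x ∈ Z_N^{d+1} and every α ∈ ℕ^{d+1} with |α| ≤ N, the shifted monomial m_α expands in monic Krawtchouk polynomials as m_α(x) = (−1)^{|α|} (−N)_{|α|} 𝛒^α · Σ_{β ≤ α} ((−α)_β / (β! (−N)_{|β|} 𝛒^β)) · L_β(x; ρ, N). -/

import Mathlib

open Finset

/-- Pochhammer symbol `(a)_k = a (a+1) ⋯ (a+k-1)`. -/
noncomputable def poch (a : ℝ) : ℕ → ℝ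
  | 0 => 1
  | k + 1 => poch a k * (a + k)

/-- Multi-index Pochhammer `(x)_γ = ∏ i (x i)_{γ i}`. -/
noncomputable def pochV {m : ℕ} (x : Fin m → ℝ) (γ : Fin m → ℕ) : ℝ :=
  ∏ i, poch (x i) (γ i)

/-- Multi-index factorial `γ! = ∏ i (γ i)!` (as a real number). -/
noncomputable def mfact {m : ℕ} (γ : Fin m → ℕ) : ℝ :=
  ∏ i, (Nat.factorial (γ i) : ℝ)

/-- Shifted monomial `m_γ(x) = (-1)^{|γ|} (-x)_γ`. -/
noncomputable def mono {m : ℕ} (γ : Fin m → ℕ) (x : Fin m → ℝ) : ℝ :=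
  (-1 : ℝ) ^ (∑ i, γ i) * pochV (fun i => -(x i)) γ

/-- `Z_N^{d+1} = {α ∈ ℕ^{d+1} : |α| = N}` as a finite set. -/
def ZN (d N : ℕ) : Finset (Fin (d + 1) → ℕ) :=
  (Fintype.piFinset fun _ => Finset.range (N + 1)).filter fun α => ∑ i, α i = N

/-- `{ν ∈ ℕ^d : |ν| = n}` as a finite set. -/
def idxSet (d n : ℕ) : Finset (Fin d → ℕ) :=
  (Fintype.piFinset fun _ => Finset.range (n + 1)).filter fun ν => ∑ i, ν i = n

/-- The finite set `{γ ∈ ℕ^m : γ ≤ α}`. -/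
def below {m : ℕ} (α : Fin m → ℕ) : Finset (Fin m → ℕ) :=
  Fintype.piFinset fun i => Finset.range (α i + 1)

/-- Monic Hahn polynomial `Q_α(x; κ, N)`. -/
noncomputable def monicQ (d N : ℕ) (κ : Fin (d + 1) → ℝ) (α : Fin (d + 1) → ℕ)
    (x : Fin (d + 1) → ℝ) : ℝ :=
  poch (-(N : ℝ)) (∑ i, α i) * pochV (fun i => κ i + 1) α /
      poch ((∑ i, κ i) + d + (∑ i, α i)) (∑ i, α i) *
    ∑ γ ∈ below α,
      pochV (fun i => -(α i : ℝ)) γ * poch ((∑ i, κ i) + d + (∑ i, α i)) (∑ i, γ i) *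
          (-1 : ℝ) ^ (∑ i, γ i) /
          (mfact γ * pochV (fun i => κ i + 1) γ * poch (-(N : ℝ)) (∑ i, γ i)) *
        mono γ x

/-- One-variable Hahn polynomial `Q_n(x; a, b, M)` (a `₃F₂` sum). -/
noncomputable def hahn1 (n : ℕ) (x a b M : ℝ) : ℝ :=
  ∑ k ∈ Finset.range (n + 1),
    poch (-(n : ℝ)) k * poch ((n : ℝ) + a + b + 1) k * poch (-x) k /
      (poch (a + 1) k * poch (-M) k * (Nat.factorial k : ℝ))

/-- The parameter `a_j = κ_{j+1}+⋯+κ_{d+1} + 2|ν^{j+1}| + d - j` (1-based `j`). -/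
noncomputable def aj (d : ℕ) (κ : Fin (d + 1) → ℝ) (ν : Fin d → ℕ) (j : Fin d) : ℝ :=
  (∑ i ∈ Finset.univ.filter (fun i : Fin (d + 1) => (j : ℕ) < (i : ℕ)), κ i) +
    2 * (∑ i ∈ Finset.univ.filter (fun i : Fin d => (j : ℕ) < (i : ℕ)), (ν i : ℝ)) +
    ((d - 1 - (j : ℕ) : ℕ) : ℝ)

/-- `|x_{j-1}| = x_1 + ⋯ + x_{j-1}` (1-based `j`). -/
noncomputable def sumLt (d : ℕ) (x : Fin (d + 1) → ℕ) (j : Fin d) : ℝ :=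
  ∑ i ∈ Finset.univ.filter (fun i : Fin (d + 1) => (i : ℕ) < (j : ℕ)), (x i : ℝ)

/-- `|ν^{j+1}| = ν_{j+1} + ⋯ + ν_d` (1-based `j`). -/
noncomputable def sumGt (d : ℕ) (ν : Fin d → ℕ) (j : Fin d) : ℝ :=
  ∑ i ∈ Finset.univ.filter (fun i : Fin d => (j : ℕ) < (i : ℕ)), (ν i : ℝ)

/-- Hahn polynomial of `d` variables `H_ν(x; κ, N)`. -/
noncomputable def hahnH (d N : ℕ) (κ : Fin (d + 1) → ℝ) (ν : Fin d → ℕ)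
    (x : Fin (d + 1) → ℕ) : ℝ :=
  (-1 : ℝ) ^ (∑ i, ν i) / poch (-(N : ℝ)) (∑ i, ν i) *
    ∏ j : Fin d,
      poch (κ j.castSucc + 1) (ν j) / poch (aj d κ ν j + 1) (ν j) *
        poch (-(N : ℝ) + sumLt d x j + sumGt d ν j) (ν j) *
        hahn1 (ν j) (x j.castSucc : ℝ) (κ j.castSucc) (aj d κ ν j)
          ((N : ℝ) - sumLt d x j - sumGt d ν j)

/-- Squared norm `B_ν(κ, N)` of the Hahn polynomial `H_ν(·; κ, N)`. -/
noncomputable def Bnorm (d N : ℕ) (κ : Fin (d + 1) → ℝ) (ν : Fin d → ℕ) : ℝ :=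
  (-1 : ℝ) ^ (∑ i, ν i) * poch ((∑ i, κ i) + d + 1) (N + ∑ i, ν i) /
      (poch (-(N : ℝ)) (∑ i, ν i) * poch ((∑ i, κ i) + d + 1) N *
        poch ((∑ i, κ i) + d + 1) (2 * ∑ i, ν i)) *
    ∏ j : Fin d,
      poch (κ j.castSucc + aj d κ ν j + 1) (2 * ν j) * poch (κ j.castSucc + 1) (ν j) *
          (Nat.factorial (ν j) : ℝ) /
        (poch (κ j.castSucc + aj d κ ν j + 1) (ν j) * poch (aj d κ ν j + 1) (ν j))

/-- Projection `Q_{α,n}(x; κ, N)` of `m_α/(κ+1)_α` onto the space of degree `n`. -/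
noncomputable def monicQn (d N : ℕ) (κ : Fin (d + 1) → ℝ) (α : Fin (d + 1) → ℕ) (n : ℕ)
    (x : Fin (d + 1) → ℝ) : ℝ :=
  (-1 : ℝ) ^ (∑ i, α i) * poch (-(N : ℝ)) (∑ i, α i) * poch ((∑ i, κ i) + d + 1) (2 * n) /
      (poch (-(N : ℝ)) n * poch ((∑ i, κ i) + d + 1) ((∑ i, α i) + n)) *
    ∑ β ∈ ZN d n,
      pochV (fun i => -(α i : ℝ)) β / (mfact β * pochV (fun i => κ i + 1) β) *
        monicQ d N κ β x

/-- The kernel `E_k(x, y; κ) = Σ_{|γ|=k} (-x)_γ (-y)_γ / (γ! (κ+1)_γ)`. -/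
noncomputable def Efun (d : ℕ) (κ : Fin (d + 1) → ℝ) (x y : Fin (d + 1) → ℕ) (k : ℕ) : ℝ :=
  ∑ γ ∈ ZN d k,
    pochV (fun i => -(x i : ℝ)) γ * pochV (fun i => -(y i : ℝ)) γ /
      (mfact γ * pochV (fun i => κ i + 1) γ)

/-- Monic Jacobi polynomial on the simplex `R_α^κ(x)`. -/
noncomputable def jacobiR (d : ℕ) (κ : Fin (d + 1) → ℝ) (α : Fin (d + 1) → ℕ)
    (x : Fin d → ℝ) : ℝ :=
  (-1 : ℝ) ^ (∑ i, α i) * pochV (fun i => κ i + 1) α /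
      poch ((∑ i, κ i) + d + (∑ i, α i)) (∑ i, α i) *
    ∑ γ ∈ below α,
      pochV (fun i => -(α i : ℝ)) γ * poch ((∑ i, κ i) + d + (∑ i, α i)) (∑ i, γ i) /
          (pochV (fun i => κ i + 1) γ * mfact γ) *
        ∏ i, (Fin.snoc x (1 - ∑ i, x i) : Fin (d + 1) → ℝ) i ^ γ i

/-- One-variable Krawtchouk polynomial `K_n(x; p, M)`. -/
noncomputable def kraw1 (n : ℕ) (x p M : ℝ) : ℝ :=
  ∑ k ∈ Finset.range (n + 1),
    poch (-(n : ℝ)) k * poch (-x) k / (poch (-M) k * (Nat.factorial k : ℝ) * p ^ k)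

/-- The extended parameter `𝛒 = (ρ_1, …, ρ_d, 1 - |ρ|)`. -/
noncomputable def brho (d : ℕ) (ρ : Fin d → ℝ) : Fin (d + 1) → ℝ :=
  Fin.snoc ρ (1 - ∑ i, ρ i)

/-- `𝛒^γ = ∏ i 𝛒_i^{γ i}`. -/
noncomputable def bpow (d : ℕ) (ρ : Fin d → ℝ) (γ : Fin (d + 1) → ℕ) : ℝ :=
  ∏ i, brho d ρ i ^ γ i

/-- `|𝛒_j| = ρ_1 + ⋯ + ρ_j` (1-based `j`). -/
noncomputable def sumLe (d : ℕ) (ρ : Fin d → ℝ) (j : Fin d) : ℝ :=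
  ∑ i ∈ Finset.univ.filter (fun i : Fin d => (i : ℕ) ≤ (j : ℕ)), ρ i

/-- `|𝛒_{j-1}| = ρ_1 + ⋯ + ρ_{j-1}` (1-based `j`). -/
noncomputable def sumLtρ (d : ℕ) (ρ : Fin d → ℝ) (j : Fin d) : ℝ :=
  ∑ i ∈ Finset.univ.filter (fun i : Fin d => (i : ℕ) < (j : ℕ)), ρ i

/-- Krawtchouk polynomial of `d` variables `K_ν(x; ρ, N)`. -/
noncomputable def krawH (d N : ℕ) (ρ : Fin d → ℝ) (ν : Fin d → ℕ)
    (x : Fin (d + 1) → ℕ) : ℝ :=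
  (-1 : ℝ) ^ (∑ i, ν i) / poch (-(N : ℝ)) (∑ i, ν i) *
    ∏ j : Fin d,
      ρ j ^ ν j / (1 - sumLe d ρ j) ^ ν j *
        poch (-(N : ℝ) + sumLt d x j + sumGt d ν j) (ν j) *
        kraw1 (ν j) (x j.castSucc : ℝ) (ρ j / (1 - sumLtρ d ρ j))
          ((N : ℝ) - sumLt d x j - sumGt d ν j)

/-- Squared norm `C_ν(ρ, N)` of the Krawtchouk polynomial `K_ν(·; ρ, N)`. -/
noncomputable def Cnorm (d N : ℕ) (ρ : Fin d → ℝ) (ν : Fin d → ℕ) : ℝ :=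
  (-1 : ℝ) ^ (∑ i, ν i) / (poch (-(N : ℝ)) (∑ i, ν i) * (Nat.factorial N : ℝ)) *
    ∏ j : Fin d,
      (Nat.factorial (ν j) : ℝ) * ρ j ^ ν j /
        (1 - sumLe d ρ j) ^ ((ν j : ℤ) - ((Fin.snoc ν 0 : Fin (d + 1) → ℕ) j.succ : ℤ))

/-- Monic Krawtchouk polynomial `L_α(x; ρ, N)`. -/
noncomputable def monicL (d N : ℕ) (ρ : Fin d → ℝ) (α : Fin (d + 1) → ℕ)
    (x : Fin (d + 1) → ℝ) : ℝ :=
  poch (-(N : ℝ)) (∑ i, α i) * bpow d ρ α *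
    ∑ γ ∈ below α,
      pochV (fun i => -(α i : ℝ)) γ * (-1 : ℝ) ^ (∑ i, γ i) /
          (mfact γ * poch (-(N : ℝ)) (∑ i, γ i) * bpow d ρ γ) *
        mono γ x

/-- Projection `L_{α,n}(x; ρ, N)` of `m_α/𝛒^α` onto the space of degree `n`. -/
noncomputable def monicLn (d N : ℕ) (ρ : Fin d → ℝ) (α : Fin (d + 1) → ℕ) (n : ℕ)
    (x : Fin (d + 1) → ℝ) : ℝ :=
  (-1 : ℝ) ^ (∑ i, α i) * poch (-(N : ℝ)) (∑ i, α i) / poch (-(N : ℝ)) n *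
    ∑ β ∈ ZN d n,
      pochV (fun i => -(α i : ℝ)) β / (mfact β * bpow d ρ β) * monicL d N ρ β x

/-- The kernel `F_k(x, y; ρ) = Σ_{|γ|=k} (-x)_γ (-y)_γ / (γ! 𝛒^γ)`. -/
noncomputable def Ffun (d : ℕ) (ρ : Fin d → ℝ) (x y : Fin (d + 1) → ℕ) (k : ℕ) : ℝ :=
  ∑ γ ∈ ZN d k,
    pochV (fun i => -(x i : ℝ)) γ * pochV (fun i => -(y i : ℝ)) γ / (mfact γ * bpow d ρ γ)

/-!
Substituting the definition of `L_β` turns the right-hand side into a double sum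
`Σ_{γ ≤ β ≤ α} (-α)_β (-β)_γ / β! · c_γ` with `c_γ` a multiple of `m_γ(x)`, once the factors
`(-N)_{|β|} 𝛒^β` cancel (they are nonzero since `|β| ≤ |α| ≤ N` and `𝛒` has nonzero entries).
The inner sum over `β` factors over the coordinates, and coordinatewise it is the binomial
inversion `Σ_b (-1)^b C(a,b) C(b,g) = (-1)^a δ_{ga}`, so only `γ = α` survives.
-/

lemma poch_eq_eval_ascPochhammer (a : ℝ) (k : ℕ) : poch a k = (ascPochhammer ℝ k).eval a := by
  induction k with
  | zero => simp [poch]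
  | succ k ih => rw [poch, ih, ascPochhammer_succ_eval]

lemma poch_neg_natCast (n k : ℕ) :
    poch (-(n : ℝ)) k = (-1) ^ k * k.factorial * n.choose k := by
  rw [poch_eq_eval_ascPochhammer, ascPochhammer_eval_neg_eq_descPochhammer,
    descPochhammer_eval_eq_descFactorial, Nat.descFactorial_eq_factorial_mul_choose]
  push_cast
  ring

lemma poch_neg_natCast_ne_zero {n k : ℕ} (h : k ≤ n) : poch (-(n : ℝ)) k ≠ 0 := by
  rw [poch_neg_natCast]
  have := Nat.choose_pos h
  have := k.factorial_pos
  positivity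

lemma sum_range_neg_one_pow_mul_choose_mul_choose (a g : ℕ) :
    ∑ b ∈ range (a + 1), (-1 : ℤ) ^ b * a.choose b * b.choose g =
      if g = a then (-1) ^ a else 0 := by
  rcases lt_or_ge a g with hag | hga
  · rw [if_neg hag.ne']
    refine sum_eq_zero fun b hb => ?_
    rw [Nat.choose_eq_zero_of_lt (n := b) (k := g) (by grind), Nat.cast_zero, mul_zero]
  obtain ⟨n, rfl⟩ := Nat.exists_eq_add_of_le hga
  have hlow : ∑ b ∈ range g, (-1 : ℤ) ^ b * (g + n).choose b * b.choose g = 0 :=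
    sum_eq_zero fun b hb => by
      rw [Nat.choose_eq_zero_of_lt (mem_range.mp hb), Nat.cast_zero, mul_zero]
  have hshift : ∀ c, (-1 : ℤ) ^ (g + c) * (g + n).choose (g + c) * (g + c).choose g =
      (-1) ^ g * (g + n).choose g * ((-1) ^ c * n.choose c) := by
    intro c
    have h := Nat.choose_mul (n := g + n) (Nat.le_add_right g c)
    rw [Nat.add_sub_cancel_left, Nat.add_sub_cancel_left] at h
    have hcast : ((g + n).choose (g + c) : ℤ) * (g + c).choose g =
        (g + n).choose g * n.choose c := by exact_mod_cast h
    rw [pow_add]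
    linear_combination ((-1 : ℤ) ^ g * (-1) ^ c) * hcast
  rw [show g + n + 1 = g + (n + 1) by ring, sum_range_add, hlow, zero_add]
  simp only [hshift, ← mul_sum, Int.alternating_sum_range_choose]
  rcases eq_or_ne n 0 with rfl | hn
  · simp
  · simp [hn]

lemma sum_range_poch_neg_mul_poch_neg_div_factorial (a g : ℕ) :
    ∑ b ∈ range (a + 1), poch (-(a : ℝ)) b * poch (-(b : ℝ)) g / b.factorial =
      if g = a then (a.factorial : ℝ) else 0 := by
  have hterm : ∀ b ∈ range (a + 1), poch (-(a : ℝ)) b * poch (-(b : ℝ)) g / b.factorial =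
      (-1) ^ g * g.factorial * (((-1 : ℤ) ^ b * a.choose b * b.choose g : ℤ) : ℝ) := by
    intro b _
    rw [poch_neg_natCast, poch_neg_natCast]
    have : (b.factorial : ℝ) ≠ 0 := by positivity
    push_cast
    field_simp
  rw [sum_congr rfl hterm, ← mul_sum, ← Int.cast_sum,
    sum_range_neg_one_pow_mul_choose_mul_choose]
  split_ifs with h
  · subst h
    push_cast
    rw [mul_comm, ← mul_assoc, ← pow_add, Even.neg_one_pow ⟨g, rfl⟩, one_mul]
  · simp

lemma mem_below {m : ℕ} {α β : Fin m → ℕ} : β ∈ below α ↔ ∀ i, β i ≤ α i := by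
  simp [below, Fintype.mem_piFinset]

lemma pochV_neg_natCast_eq_zero {m : ℕ} {β γ : Fin m → ℕ} (h : γ ∉ below β) :
    pochV (fun i => -(β i : ℝ)) γ = 0 := by
  obtain ⟨i, hi⟩ : ∃ i, β i < γ i := by simpa [mem_below] using h
  refine prod_eq_zero (mem_univ i) ?_
  rw [poch_neg_natCast, Nat.choose_eq_zero_of_lt hi, Nat.cast_zero, mul_zero]

lemma mfact_ne_zero {m : ℕ} (γ : Fin m → ℕ) : mfact γ ≠ 0 :=
  prod_ne_zero_iff.mpr fun i _ => Nat.cast_ne_zero.mpr (γ i).factorial_ne_zero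

lemma bpow_ne_zero {d : ℕ} {ρ : Fin d → ℝ} (hρ : ∀ i, ρ i ≠ 0) (hρs : ∑ i, ρ i ≠ 1)
    (γ : Fin (d + 1) → ℕ) : bpow d ρ γ ≠ 0 := by
  refine prod_ne_zero_iff.mpr fun i _ => pow_ne_zero _ ?_
  induction i using Fin.lastCases with
  | last => rw [brho, Fin.snoc_last, sub_ne_zero]; exact hρs.symm
  | cast j => rw [brho, Fin.snoc_castSucc]; exact hρ j

lemma sum_below_pochV_neg_mul_pochV_neg_div_mfact {m : ℕ} (α γ : Fin m → ℕ) :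
    ∑ β ∈ below α, pochV (fun i => -(α i : ℝ)) β * pochV (fun i => -(β i : ℝ)) γ / mfact β =
      if γ = α then mfact α else 0 := by
  have hprod : ∀ β ∈ below α,
      pochV (fun i => -(α i : ℝ)) β * pochV (fun i => -(β i : ℝ)) γ / mfact β =
        ∏ i, poch (-(α i : ℝ)) (β i) * poch (-(β i : ℝ)) (γ i) / (β i).factorial := by
    intro β _
    rw [pochV, pochV, mfact, ← prod_mul_distrib, ← prod_div_distrib]
  rw [sum_congr rfl hprod, below, ← prod_univ_sum (t := fun i => range (α i + 1))
    (f := fun i b => poch (-(α i : ℝ)) b * poch (-(b : ℝ)) (γ i) / b.factorial)]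
  simp only [sum_range_poch_neg_mul_poch_neg_div_factorial, Fintype.prod_ite_zero, ← funext_iff,
    mfact]

lemma sum_below_pochV_neg_mul_sum_below_pochV_neg {m : ℕ} (α : Fin m → ℕ)
    (c : (Fin m → ℕ) → ℝ) :
    ∑ β ∈ below α, pochV (fun i => -(α i : ℝ)) β / mfact β *
        ∑ γ ∈ below β, pochV (fun i => -(β i : ℝ)) γ * c γ =
      mfact α * c α := by
  have hextend : ∀ β ∈ below α, ∑ γ ∈ below β, pochV (fun i => -(β i : ℝ)) γ * c γ =
      ∑ γ ∈ below α, pochV (fun i => -(β i : ℝ)) γ * c γ := by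
    intro β hβ
    refine sum_subset (fun γ hγ => mem_below.mpr fun i => ?_) fun γ _ hγ => ?_
    · exact (mem_below.mp hγ i).trans (mem_below.mp hβ i)
    · rw [pochV_neg_natCast_eq_zero hγ, zero_mul]
  calc _ = ∑ γ ∈ below α, (∑ β ∈ below α,
          pochV (fun i => -(α i : ℝ)) β * pochV (fun i => -(β i : ℝ)) γ / mfact β) * c γ := by
        rw [sum_congr rfl fun β hβ => by rw [hextend β hβ, mul_sum], sum_comm]
        refine sum_congr rfl fun γ _ => ?_
        rw [sum_mul]
        exact sum_congr rfl fun β _ => by ring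
    _ = mfact α * c α := by
        simp only [sum_below_pochV_neg_mul_pochV_neg_div_mfact, ite_mul, zero_mul, sum_ite_eq',
          if_pos (mem_below.mpr fun _ => le_rfl)]

theorem mono_eq_sum_monicKrawtchouk_general (d N : ℕ) (ρ : Fin d → ℝ)
    (hρ : ∀ i, 0 < ρ i ∧ ρ i < 1) (hρs : ∑ i, ρ i < 1)
    (x : Fin (d + 1) → ℕ)
    (α : Fin (d + 1) → ℕ) (hα : ∑ i, α i ≤ N) :
    mono α (fun i => (x i : ℝ)) =
      (-1 : ℝ) ^ (∑ i, α i) * poch (-(N : ℝ)) (∑ i, α i) * bpow d ρ α *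
        ∑ β ∈ below α,
          pochV (fun i => -(α i : ℝ)) β /
              (mfact β * poch (-(N : ℝ)) (∑ i, β i) * bpow d ρ β) *
            monicL d N ρ β (fun i => (x i : ℝ)) := by
  have hbpow := bpow_ne_zero (fun i => (hρ i).1.ne') hρs.ne
  set c : (Fin (d + 1) → ℕ) → ℝ := fun γ => (-1) ^ (∑ i, γ i) /
      (mfact γ * poch (-(N : ℝ)) (∑ i, γ i) * bpow d ρ γ) * mono γ (fun i => (x i : ℝ)) with hc
  have hterm : ∀ β ∈ below α, pochV (fun i => -(α i : ℝ)) β /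
        (mfact β * poch (-(N : ℝ)) (∑ i, β i) * bpow d ρ β) * monicL d N ρ β (fun i => (x i : ℝ)) =
      pochV (fun i => -(α i : ℝ)) β / mfact β *
        ∑ γ ∈ below β, pochV (fun i => -(β i : ℝ)) γ * c γ := by
    intro β hβ
    have := poch_neg_natCast_ne_zero ((sum_le_sum fun i _ => mem_below.mp hβ i).trans hα)
    have := hbpow β
    have := mfact_ne_zero β
    rw [monicL]
    simp only [hc, mul_div_assoc]
    field_simp
  rw [sum_congr rfl hterm, sum_below_pochV_neg_mul_sum_below_pochV_neg]
  have := poch_neg_natCast_ne_zero hα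
  have := hbpow α
  have := mfact_ne_zero α
  have hsq : (-1 : ℝ) ^ (∑ i, α i) * (-1) ^ (∑ i, α i) = 1 := by rw [← mul_pow]; norm_num
  simp only [hc]
  field_simp
  linear_combination -mono α (fun i => (x i : ℝ)) * hsq

/-- expansion of the shifted monomial `m_α` in monic Krawtchouk
polynomials. -/
theorem mono_eq_sum_monicKrawtchouk (d N : ℕ) (hd : 1 ≤ d) (ρ : Fin d → ℝ)
    (hρ : ∀ i, 0 < ρ i ∧ ρ i < 1) (hρs : ∑ i, ρ i < 1)
    (x : Fin (d + 1) → ℕ) (hx : x ∈ ZN d N)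
    (α : Fin (d + 1) → ℕ) (hα : ∑ i, α i ≤ N) :
    mono α (fun i => (x i : ℝ)) =
      (-1 : ℝ) ^ (∑ i, α i) * poch (-(N : ℝ)) (∑ i, α i) * bpow d ρ α *
        ∑ β ∈ below α,
          pochV (fun i => -(α i : ℝ)) β /
              (mfact β * poch (-(N : ℝ)) (∑ i, β i) * bpow d ρ β) *
            monicL d N ρ β (fun i => (x i : ℝ)) :=
  mono_eq_sum_monicKrawtchouk_general d N ρ hρ hρs x α hα
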